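/- Assume Σ = E[X Xᵀ] is positive definite with smallest eigenvalue λ_min > 0, and let A = X (X − γY)ᵀ. Then, in the Loewner order, E[Aᵀ Σ^{−1} A] ≼ λ_min^{−1} (1+γ)² Σ. -/

import Mathlib

/-!
Write `Z = X - γY` and `q(X) = Xᵀ Σ⁻¹ X`, so that `xᵀ Aᵀ Σ⁻¹ A x = q(X) ⟨Z, x⟩²`. Since
`Σ ≽ λ_min I`, we have `Σ⁻¹ ≼ λ_min⁻¹ I`, hence `q(X) ≤ λ_min⁻¹ ‖X‖² ≤ λ_min⁻¹`. Pointwise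
`⟨Z, x⟩² ≤ (1 + γ) ⟨X, x⟩² + γ (1 + γ) ⟨Y, x⟩²`, and `⟨Y, x⟩` has the same law as `⟨X, x⟩`,
so `E⟨Z, x⟩² ≤ (1 + γ)² E⟨X, x⟩² = (1 + γ)² xᵀ Σ x`.
-/

open MeasureTheory ProbabilityTheory Matrix
noncomputable section

def euclNorm {d : ℕ} (u : Fin d → ℝ) : ℝ := Real.sqrt (∑ i, u i ^ 2)

def matExp {d : ℕ} {Ω : Type*} [MeasurableSpace Ω] (P : Measure Ω)
    (M : Ω → Matrix (Fin d) (Fin d) ℝ) : Matrix (Fin d) (Fin d) ℝ :=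
  Matrix.of fun i j => ∫ ω, M ω i j ∂P

def opNorm {d : ℕ} (M : Matrix (Fin d) (Fin d) ℝ) : ℝ :=
  ‖Matrix.toEuclideanCLM (𝕜 := ℝ) M‖

theorem norm_le_euclNorm {d : ℕ} (u : Fin d → ℝ) : ‖u‖ ≤ euclNorm u :=
  (pi_norm_le_iff_of_nonneg (Real.sqrt_nonneg _)).mpr fun i =>
    Real.abs_le_sqrt (Finset.single_le_sum (fun j _ => sq_nonneg (u j)) (Finset.mem_univ i))

theorem dotProduct_self_eq_euclNorm_sq {d : ℕ} (u : Fin d → ℝ) : u ⬝ᵥ u = euclNorm u ^ 2 := by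
  rw [euclNorm, Real.sq_sqrt (Finset.sum_nonneg fun i _ => sq_nonneg (u i))]
  simp only [dotProduct, sq]

namespace Matrix

variable {n R : Type*} [Fintype n]

theorem transpose_vecMulVec_mul_mul_vecMulVec [CommRing R] (u w : n → R) (S : Matrix n n R) :
    (vecMulVec u w)ᵀ * S * vecMulVec u w = (u ⬝ᵥ S *ᵥ u) • vecMulVec w w := by
  rw [transpose_vecMulVec, vecMulVec_mul, vecMulVec_mul_vecMulVec, ← dotProduct_mulVec,
    vecMulVec_smul]

theorem dotProduct_vecMulVec_self_mulVec [CommRing R] (w x : n → R) :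
    x ⬝ᵥ vecMulVec w w *ᵥ x = (w ⬝ᵥ x) ^ 2 := by
  rw [vecMulVec_mulVec, op_smul_eq_smul, dotProduct_smul, smul_eq_mul, dotProduct_comm, sq]

variable [DecidableEq n]

theorem IsHermitian.le_eigenvalues_of_mem_lowerBounds {S : Matrix n n ℝ} (hS : S.IsHermitian)
    {c : ℝ} (hc : c ∈ lowerBounds {t | ∃ v : n → ℝ, v ≠ 0 ∧ S *ᵥ v = t • v}) (i : n) :
    c ≤ hS.eigenvalues i :=
  hc ⟨_, (WithLp.ofLp_eq_zero 2).not.mpr (hS.eigenvectorBasis.orthonormal.ne_zero i),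
    hS.mulVec_eigenvectorBasis i⟩

open scoped MatrixOrder in
theorem IsHermitian.posSemidef_sub_smul_one {S : Matrix n n ℝ} (hS : S.IsHermitian) {c : ℝ}
    (hc : ∀ i, c ≤ hS.eigenvalues i) : (S - c • 1).PosSemidef := by
  rw [← Algebra.algebraMap_eq_smul_one, ← le_iff]
  refine algebraMap_le_of_le_spectrum (fun x hx => ?_) hS
  obtain ⟨i, rfl⟩ := hS.spectrum_real_eq_range_eigenvalues ▸ hx
  exact hc i

/- With `u = S x` and `B = S - c • 1`, `‖S x‖² - c ⟪x, S x⟫ = ‖B x‖² + c ⟪x, B x⟫ ≥ 0`. -/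
theorem dotProduct_inv_mulVec_le_of_posSemidef_sub_smul_one {S : Matrix n n ℝ} {c : ℝ}
    (hc : 0 < c) (hSc : (S - c • 1).PosSemidef) (u : n → ℝ) :
    u ⬝ᵥ S⁻¹ *ᵥ u ≤ c⁻¹ * (u ⬝ᵥ u) := by
  have hS : S.PosDef := sub_add_cancel S (c • 1) ▸ PosDef.posSemidef_add hSc (PosDef.one.smul hc)
  set x := S⁻¹ *ᵥ u
  have hu : u = S *ᵥ x := by
    rw [mulVec_mulVec, mul_nonsing_inv _ (isUnit_iff_isUnit_det S |>.mp hS.isUnit), one_mulVec]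
  set B := S - c • 1
  have hSx : S *ᵥ x = B *ᵥ x + c • x := by
    rw [sub_mulVec, smul_mulVec, one_mulVec, sub_add_cancel]
  have hB : 0 ≤ x ⬝ᵥ B *ᵥ x := by simpa using hSc.dotProduct_mulVec_nonneg x
  have hBB : 0 ≤ B *ᵥ x ⬝ᵥ B *ᵥ x := dotProduct_self_star_nonneg _
  rw [le_inv_mul_iff₀ hc, hu, hSx]
  simp only [add_dotProduct, dotProduct_add, smul_dotProduct, dotProduct_smul, smul_eq_mul,
    dotProduct_comm (B *ᵥ x) x]
  nlinarith

end Matrix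

theorem dotProduct_inv_mulVec_le_of_euclNorm_le_one {d : ℕ} {S : Matrix (Fin d) (Fin d) ℝ}
    (hS : S.IsHermitian) {c : ℝ} (hc : 0 < c)
    (hcS : c ∈ lowerBounds {t | ∃ v : Fin d → ℝ, v ≠ 0 ∧ S *ᵥ v = t • v}) {u : Fin d → ℝ}
    (hu : euclNorm u ≤ 1) : u ⬝ᵥ S⁻¹ *ᵥ u ≤ c⁻¹ := by
  refine (dotProduct_inv_mulVec_le_of_posSemidef_sub_smul_one hc
    (hS.posSemidef_sub_smul_one (hS.le_eigenvalues_of_mem_lowerBounds hcS)) u).trans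
    (mul_le_of_le_one_right (by positivity) ?_)
  rw [dotProduct_self_eq_euclNorm_sq]
  exact pow_le_one₀ (Real.sqrt_nonneg _) hu

section Expectation

variable {Ω : Type*} [MeasurableSpace Ω] {P : Measure Ω}

theorem integrable_comp_of_ae_mem_isCompact {E : Type*} [TopologicalSpace E] [MeasurableSpace E]
    [OpensMeasurableSpace E] [IsFiniteMeasure P] {W : Ω → E} {K : Set E} (hK : IsCompact K)
    (hW : AEMeasurable W P) (hWK : ∀ᵐ ω ∂P, W ω ∈ K) {g : E → ℝ} (hg : Continuous g) :
    Integrable (fun ω => g (W ω)) P := by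
  obtain ⟨C, hC⟩ := hK.exists_bound_of_continuousOn hg.continuousOn
  exact .of_bound (hg.measurable.comp_aemeasurable hW).aestronglyMeasurable C
    (hWK.mono fun ω hω => hC _ hω)

theorem integrable_comp₂_of_euclNorm_le_one [IsFiniteMeasure P] {d : ℕ} {X Y : Ω → Fin d → ℝ}
    (hX : AEMeasurable X P) (hY : AEMeasurable Y P) (hX1 : ∀ᵐ ω ∂P, euclNorm (X ω) ≤ 1)
    (hY1 : ∀ᵐ ω ∂P, euclNorm (Y ω) ≤ 1) {g : (Fin d → ℝ) → (Fin d → ℝ) → ℝ}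
    (hg : Continuous (Function.uncurry g)) : Integrable (fun ω => g (X ω) (Y ω)) P := by
  refine integrable_comp_of_ae_mem_isCompact
    ((isCompact_closedBall 0 1).prod (isCompact_closedBall 0 1)) (hX.prodMk hY) ?_ hg
  filter_upwards [hX1, hY1] with ω hXω hYω
  exact ⟨mem_closedBall_zero_iff.mpr ((norm_le_euclNorm _).trans hXω),
    mem_closedBall_zero_iff.mpr ((norm_le_euclNorm _).trans hYω)⟩

theorem dotProduct_matExp_mulVec {d : ℕ} {M : Ω → Matrix (Fin d) (Fin d) ℝ}
    (hM : ∀ i j, Integrable (fun ω => M ω i j) P) (x y : Fin d → ℝ) :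
    x ⬝ᵥ matExp P M *ᵥ y = ∫ ω, x ⬝ᵥ M ω *ᵥ y ∂P := by
  have hterm i j : Integrable (fun ω => x i * (M ω i j * y j)) P :=
    ((hM i j).mul_const _).const_mul _
  simp only [dotProduct, mulVec, matExp, of_apply, Finset.mul_sum]
  rw [integral_finsetSum _ fun i _ => integrable_finsetSum _ fun j _ => hterm i j]
  refine Finset.sum_congr rfl fun i _ => ?_
  rw [integral_finsetSum _ fun j _ => hterm i j]
  refine Finset.sum_congr rfl fun j _ => ?_
  rw [integral_const_mul, integral_mul_const]

theorem isHermitian_matExp {d : ℕ} {M : Ω → Matrix (Fin d) (Fin d) ℝ}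
    (hM : ∀ ω, (M ω).IsHermitian) : (matExp P M).IsHermitian := by
  ext i j
  simp only [conjTranspose_apply, matExp, of_apply, star_trivial]
  exact integral_congr_ae (ae_of_all _ fun ω => by simpa using (hM ω).apply i j)

theorem integral_mul_le_of_ae_le {f g : Ω → ℝ} {c : ℝ} (hfg : Integrable (fun ω => f ω * g ω) P)
    (hg : Integrable g P) (hg0 : ∀ᵐ ω ∂P, 0 ≤ g ω) (hfc : ∀ᵐ ω ∂P, f ω ≤ c) :
    ∫ ω, f ω * g ω ∂P ≤ c * ∫ ω, g ω ∂P := by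
  rw [← integral_const_mul]
  refine integral_mono_ae hfg (hg.const_mul c) ?_
  filter_upwards [hg0, hfc] with ω hgω hfω
  exact mul_le_mul_of_nonneg_right hfω hgω

theorem integral_sub_mul_sq_le_of_identDistrib {a b : Ω → ℝ} (hab : IdentDistrib a b P P)
    (ha : Integrable (fun ω => a ω ^ 2) P) {γ : ℝ} (hγ : 0 ≤ γ) :
    ∫ ω, (a ω - γ * b ω) ^ 2 ∂P ≤ (1 + γ) ^ 2 * ∫ ω, a ω ^ 2 ∂P := by
  have hsq : IdentDistrib (fun ω => a ω ^ 2) (fun ω => b ω ^ 2) P P :=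
    hab.comp (measurable_id.pow_const 2)
  have hb : Integrable (fun ω => b ω ^ 2) P := hsq.integrable_iff.mp ha
  calc ∫ ω, (a ω - γ * b ω) ^ 2 ∂P
      ≤ ∫ ω, ((1 + γ) * a ω ^ 2 + (γ + γ ^ 2) * b ω ^ 2) ∂P :=
        integral_mono_of_nonneg (ae_of_all _ fun _ => sq_nonneg _)
          ((ha.const_mul _).add (hb.const_mul _))
          -- the difference of the two sides is `γ (a + b)²`
          (ae_of_all _ fun ω => by nlinarith [mul_nonneg hγ (sq_nonneg (a ω + b ω))])
    _ = (1 + γ) ^ 2 * ∫ ω, a ω ^ 2 ∂P := by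
        rw [integral_add (ha.const_mul _) (hb.const_mul _), integral_const_mul,
          integral_const_mul, ← hsq.integral_eq]
        ring

end Expectation

theorem stmt18_general {d : ℕ} (γ : ℝ) (hγ : γ ∈ Set.Ico (0 : ℝ) 1)
    {Ω : Type*} [MeasurableSpace Ω] (P : Measure Ω) [IsProbabilityMeasure P]
    (X Y : Ω → Fin d → ℝ)
    (hX1 : ∀ᵐ ω ∂P, euclNorm (X ω) ≤ 1) (hY1 : ∀ᵐ ω ∂P, euclNorm (Y ω) ≤ 1)
    (hXY : IdentDistrib X Y P P)
    (Sig : Matrix (Fin d) (Fin d) ℝ)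
    (hSig : Sig = matExp P (fun ω => vecMulVec (X ω) (X ω))) (hpd : Sig.PosDef)
    (lam : ℝ) (hlampos : 0 < lam)
    (hlam : IsLeast {t : ℝ | ∃ v : Fin d → ℝ, v ≠ 0 ∧ Sig.mulVec v = t • v} lam) :
    ((lam⁻¹ * (1 + γ) ^ 2) • Sig
      - matExp P (fun ω =>
          (vecMulVec (X ω) (X ω - γ • Y ω))ᵀ * Sig⁻¹
            * vecMulVec (X ω) (X ω - γ • Y ω))).PosSemidef := by
  have hintegrable {g : (Fin d → ℝ) → (Fin d → ℝ) → ℝ} (hg : Continuous (Function.uncurry g)) :=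
    integrable_comp₂_of_euclNorm_le_one hXY.aemeasurable_fst hXY.aemeasurable_snd hX1 hY1 hg
  have hq : ∀ᵐ ω ∂P, X ω ⬝ᵥ Sig⁻¹ *ᵥ X ω ≤ lam⁻¹ :=
    hX1.mono fun ω => dotProduct_inv_mulVec_le_of_euclNorm_le_one hpd.1 hlampos hlam.2
  simp_rw [transpose_vecMulVec_mul_mul_vecMulVec]
  refine .of_dotProduct_mulVec_nonneg ((hpd.1.smul (.all _)).sub (isHermitian_matExp fun ω =>
    (IsHermitian.smul (by ext; simp [vecMulVec_apply, mul_comm]) (.all _)))) fun x => ?_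
  have hSig_quad : x ⬝ᵥ Sig *ᵥ x = ∫ ω, (X ω ⬝ᵥ x) ^ 2 ∂P := by
    rw [hSig, dotProduct_matExp_mulVec fun i j => hintegrable (g := fun a _ => vecMulVec a a i j)
      (by fun_prop)]
    simp_rw [dotProduct_vecMulVec_self_mulVec]
  rw [star_trivial, sub_mulVec, dotProduct_sub, smul_mulVec, dotProduct_smul, smul_eq_mul,
    sub_nonneg, hSig_quad, dotProduct_matExp_mulVec fun i j => hintegrable (g := fun a b =>
      ((a ⬝ᵥ Sig⁻¹ *ᵥ a) • vecMulVec (a - γ • b) (a - γ • b)) i j) (by fun_prop)]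
  simp_rw [smul_mulVec, dotProduct_smul, dotProduct_vecMulVec_self_mulVec, sub_dotProduct,
    smul_dotProduct, smul_eq_mul]
  calc ∫ ω, X ω ⬝ᵥ Sig⁻¹ *ᵥ X ω * (X ω ⬝ᵥ x - γ * (Y ω ⬝ᵥ x)) ^ 2 ∂P
      ≤ lam⁻¹ * ∫ ω, (X ω ⬝ᵥ x - γ * (Y ω ⬝ᵥ x)) ^ 2 ∂P :=
        integral_mul_le_of_ae_le (hintegrable
          (g := fun a b => a ⬝ᵥ Sig⁻¹ *ᵥ a * (a ⬝ᵥ x - γ * (b ⬝ᵥ x)) ^ 2) (by fun_prop))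
          (hintegrable (g := fun a b => (a ⬝ᵥ x - γ * (b ⬝ᵥ x)) ^ 2) (by fun_prop))
          (ae_of_all _ fun _ => sq_nonneg _) hq
    _ ≤ lam⁻¹ * ((1 + γ) ^ 2 * ∫ ω, (X ω ⬝ᵥ x) ^ 2 ∂P) :=
        mul_le_mul_of_nonneg_left (integral_sub_mul_sq_le_of_identDistrib
          (hXY.comp (by fun_prop : Continuous fun v : Fin d → ℝ => v ⬝ᵥ x).measurable)
          (hintegrable (g := fun a _ => (a ⬝ᵥ x) ^ 2) (by fun_prop)) hγ.1) (by positivity)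
    _ = lam⁻¹ * (1 + γ) ^ 2 * ∫ ω, (X ω ⬝ᵥ x) ^ 2 ∂P := by ring

/-- If `Σ = E[X Xᵀ]` is positive definite with smallest eigenvalue
`λ_min > 0` and `A = X (X - γY)ᵀ`, then `E[Aᵀ Σ⁻¹ A] ≼ λ_min⁻¹ (1+γ)² Σ` in the Loewner
order. -/
theorem stmt18 {d : ℕ} (hd : 1 ≤ d) (γ : ℝ) (hγ : γ ∈ Set.Ico (0 : ℝ) 1)
    {Ω : Type*} [MeasurableSpace Ω] (P : Measure Ω) [IsProbabilityMeasure P]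
    (X Y : Ω → Fin d → ℝ) (hXm : Measurable X) (hYm : Measurable Y)
    (hX1 : ∀ᵐ ω ∂P, euclNorm (X ω) ≤ 1) (hY1 : ∀ᵐ ω ∂P, euclNorm (Y ω) ≤ 1)
    (hXY : IdentDistrib X Y P P)
    (Sig : Matrix (Fin d) (Fin d) ℝ)
    (hSig : Sig = matExp P (fun ω => vecMulVec (X ω) (X ω))) (hpd : Sig.PosDef)
    (lam : ℝ) (hlampos : 0 < lam)
    (hlam : IsLeast {t : ℝ | ∃ v : Fin d → ℝ, v ≠ 0 ∧ Sig.mulVec v = t • v} lam) :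
    ((lam⁻¹ * (1 + γ) ^ 2) • Sig
      - matExp P (fun ω =>
          (vecMulVec (X ω) (X ω - γ • Y ω))ᵀ * Sig⁻¹
            * vecMulVec (X ω) (X ω - γ • Y ω))).PosSemidef :=
  stmt18_general γ hγ P X Y hX1 hY1 hXY Sig hSig hpd lam hlampos hlam
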